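/- arXiv:0811.1803 — 2 statements merged into one kernel-verified Lean document; each statement's English description precedes it below -/
import Mathlib

section
/- Geometric frequency lemma: if ξ₁+ξ₂+ξ₃+ξ₄ = 0 in ℝ², |ξ₁| ∼ |ξ₂| ∼ N₁ ≥ |ξ₃| ∼ N₃ ≫ |ξ₄| ∼ N₄, and |cos∠(ξ₁+ξ₂, ξ₁+ξ₄)| ≤ θ, then |cos∠(ξ₁,ξ₃)| ≤ C(θ + N₄/N₃). -/
open scoped RealInnerProductSpace

/-! Since `ξ₁ + ξ₂ + ξ₄ = -ξ₃`, one has the exact identity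
`⟪ξ₁, ξ₃⟫ = ⟪ξ₂, ξ₄⟫ - ⟪ξ₁ + ξ₂, ξ₁ + ξ₄⟫`. The second term is at most
`θ ‖ξ₁ + ξ₂‖ ‖ξ₁ + ξ₄‖ ≲ θ N₁ N₃`, because `ξ₁ + ξ₂ = -(ξ₃ + ξ₄)` is of size `N₃`;
the first is at most `‖ξ₂‖ ‖ξ₄‖ ≲ N₁ N₄`. Dividing by `‖ξ₁‖ ‖ξ₃‖ ≳ N₁ N₃` gives the bound. -/

open InnerProductGeometry

section

variable {V : Type*} [NormedAddCommGroup V] [InnerProductSpace ℝ V]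

theorem real_inner_eq_sub_of_add_add_add_eq_zero {ξ₁ ξ₂ ξ₃ ξ₄ : V}
    (h : ξ₁ + ξ₂ + ξ₃ + ξ₄ = 0) :
    ⟪ξ₁, ξ₃⟫ = ⟪ξ₂, ξ₄⟫ - ⟪ξ₁ + ξ₂, ξ₁ + ξ₄⟫ := by
  have hξ₃ : ξ₃ = -(ξ₁ + ξ₂ + ξ₄) := eq_neg_of_add_eq_zero_left (by rw [← h]; abel)
  rw [hξ₃]
  simp only [inner_neg_right, inner_add_left, inner_add_right, real_inner_comm ξ₁ ξ₂,
    real_inner_comm ξ₄ ξ₂]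
  ring

theorem abs_real_inner_le_of_abs_cos_angle_le {x y : V} {θ : ℝ}
    (h : |Real.cos (angle x y)| ≤ θ) : |⟪x, y⟫| ≤ θ * (‖x‖ * ‖y‖) := by
  rw [← cos_angle_mul_norm_mul_norm, abs_mul, abs_of_nonneg (by positivity : 0 ≤ ‖x‖ * ‖y‖)]
  gcongr

theorem abs_real_inner_le_of_add_add_add_eq_zero {ξ₁ ξ₂ ξ₃ ξ₄ : V} {θ : ℝ}
    (h : ξ₁ + ξ₂ + ξ₃ + ξ₄ = 0) (hθ : |Real.cos (angle (ξ₁ + ξ₂) (ξ₁ + ξ₄))| ≤ θ) :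
    |⟪ξ₁, ξ₃⟫| ≤ θ * (‖ξ₁ + ξ₂‖ * ‖ξ₁ + ξ₄‖) + ‖ξ₂‖ * ‖ξ₄‖ := by
  rw [real_inner_eq_sub_of_add_add_add_eq_zero h]
  linarith [abs_sub ⟪ξ₂, ξ₄⟫ ⟪ξ₁ + ξ₂, ξ₁ + ξ₄⟫, abs_real_inner_le_norm ξ₂ ξ₄,
    abs_real_inner_le_of_abs_cos_angle_le hθ]

end

/-- **geometric frequency lemma.** If `ξ₁+ξ₂+ξ₃+ξ₄ = 0` in `ℝ²`,
`|ξ₁| ∼ |ξ₂| ∼ N₁ ≥ |ξ₃| ∼ N₃ ≫ |ξ₄| ∼ N₄`, and `|cos∠(ξ₁+ξ₂, ξ₁+ξ₄)| ≤ θ`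
(`0 < θ ≪ 1`), then `|cos∠(ξ₁,ξ₃)| ≤ C(θ + N₄/N₃)`. -/
theorem cos_angle_frequency_bound :
    ∃ C : ℝ, 0 < C ∧
      ∀ (N₁ N₃ N₄ θ : ℝ), 0 < N₄ → N₄ ≤ N₃ → N₃ ≤ N₁ → 100 * N₄ ≤ N₃ →
        0 < θ → θ ≤ 1 / 100 →
      ∀ ξ₁ ξ₂ ξ₃ ξ₄ : EuclideanSpace ℝ (Fin 2),
        ξ₁ + ξ₂ + ξ₃ + ξ₄ = 0 →
        N₁ ≤ ‖ξ₁‖ → ‖ξ₁‖ ≤ 2 * N₁ →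
        N₁ ≤ ‖ξ₂‖ → ‖ξ₂‖ ≤ 2 * N₁ →
        N₃ ≤ ‖ξ₃‖ → ‖ξ₃‖ ≤ 2 * N₃ →
        N₄ ≤ ‖ξ₄‖ → ‖ξ₄‖ ≤ 2 * N₄ →
        |(⟪ξ₁ + ξ₂, ξ₁ + ξ₄⟫ : ℝ) / (‖ξ₁ + ξ₂‖ * ‖ξ₁ + ξ₄‖)| ≤ θ →
        |(⟪ξ₁, ξ₃⟫ : ℝ) / (‖ξ₁‖ * ‖ξ₃‖)| ≤ C * (θ + N₄ / N₃) := by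
  refine ⟨16, by norm_num, ?_⟩
  intro N₁ N₃ N₄ θ hN₄ h43 h31 _ hθ _ ξ₁ ξ₂ ξ₃ ξ₄ hsum h1l h1u _ h2u h3l h3u h4l h4u hcos
  have hN₃ : 0 < N₃ := hN₄.trans_le h43
  have hN₁ : 0 < N₁ := hN₃.trans_le h31
  have hξ₁₂ : ξ₁ + ξ₂ = -(ξ₃ + ξ₄) := by rw [eq_neg_iff_add_eq_zero, ← hsum]; abel
  have h12 : ‖ξ₁ + ξ₂‖ ≤ 4 * N₃ := calc
    ‖ξ₁ + ξ₂‖ = ‖ξ₃ + ξ₄‖ := by rw [hξ₁₂, norm_neg]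
    _ ≤ ‖ξ₃‖ + ‖ξ₄‖ := norm_add_le _ _
    _ ≤ 4 * N₃ := by linarith
  have h14 : ‖ξ₁ + ξ₄‖ ≤ 4 * N₁ := (norm_add_le _ _).trans (by linarith)
  have hinner : |⟪ξ₁, ξ₃⟫| ≤ 16 * (θ + N₄ / N₃) * (N₁ * N₃) := calc
    |⟪ξ₁, ξ₃⟫| ≤ θ * (‖ξ₁ + ξ₂‖ * ‖ξ₁ + ξ₄‖) + ‖ξ₂‖ * ‖ξ₄‖ :=
      abs_real_inner_le_of_add_add_add_eq_zero hsum (by rwa [cos_angle])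
    _ ≤ θ * (4 * N₃ * (4 * N₁)) + 2 * N₁ * (2 * N₄) := by gcongr
    _ ≤ θ * (16 * (N₁ * N₃)) + 16 * (N₁ * N₄) := by nlinarith
    _ = 16 * (θ + N₄ / N₃) * (N₁ * N₃) := by field_simp
  have hpos : 0 < ‖ξ₁‖ * ‖ξ₃‖ := mul_pos (by linarith) (by linarith)
  rw [abs_div, abs_of_pos hpos, div_le_iff₀ hpos]
  exact hinner.trans (by gcongr)
end

section
/- Sextilinear symbol bound: if the quadrilinear symbol σ₄ satisfies |σ₄(ξ₁,…,ξ₄)| ≤ C min(m(ξ₁),…,m(ξ₄))²/θ, then ν₆(ξ₁,…,ξ₆) := -i Σ_{k=1}^{4} (-1)^{k+1} σ₄(ξ₁,…,ξ_k+ξ_{k+1}+ξ_{k+2},ξ_{k+3},…,ξ₆) satisfies |ν₆| ≤ C' m²(N₄*)/θ, where N₁* ≥ … ≥ N₆* are the ordered magnitudes of the ξⱼ and ξ₁+…+ξ₆ = 0. -/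
/-!
Each of the four terms of `ν₆` leaves three of the six frequencies unmerged. Two 3-element
subsets of a 6-element index set either meet or are complementary, so the unmerged triple
contains either one of the three largest frequencies or the one of magnitude exactly `N₄*`.
Hence some argument of every `σ₄` term has magnitude `≥ N₄*`, and since `m` is nonincreasing
the minimum of `m²` over the arguments is at most `m(N₄*)²`. The triangle inequality then
gives the bound with `C' = 4`.
-/

open Finset

-- Either `t` meets `s`, or `s` and `t` are complementary and `k ∈ t`.
theorem Finset.exists_mem_of_card_add_card_eq {ι : Type*} [Fintype ι] {s t : Finset ι}
    (hst : #s + #t = Fintype.card ι) {p : ι → Prop} (hs : ∀ i ∈ s, p i) {k : ι}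
    (hk : k ∉ s) (hpk : p k) : ∃ i ∈ t, p i := by
  classical
  by_cases hdisj : Disjoint s t
  · have hunion : s ∪ t = univ :=
      eq_univ_of_card _ (by rw [card_union_of_disjoint hdisj, hst])
    have hkt : k ∈ s ∪ t := hunion ▸ mem_univ k
    exact ⟨k, (mem_union.1 hkt).resolve_left hk, hpk⟩
  · obtain ⟨i, his, hit⟩ := not_disjoint_iff.1 hdisj
    exact ⟨i, hit, hs i his⟩

theorem sq_min_min_le_sq_of_le {a b c d t : ℝ} (ha : 0 ≤ a) (hb : 0 ≤ b) (hc : 0 ≤ c)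
    (hd : 0 ≤ d) (h : a ≤ t ∨ b ≤ t ∨ c ≤ t ∨ d ≤ t) :
    min (min a b) (min c d) ^ 2 ≤ t ^ 2 := by
  refine pow_le_pow_left₀ (le_min (le_min ha hb) (le_min hc hd)) ?_ 2
  rcases h with h | h | h | h
  · exact min_le_of_left_le (min_le_of_left_le h)
  · exact min_le_of_left_le (min_le_of_right_le h)
  · exact min_le_of_right_le (min_le_of_left_le h)
  · exact min_le_of_right_le (min_le_of_right_le h)

theorem norm_symbol_le_of_le_norm {E F : Type*} [SeminormedAddGroup E] [Norm F]
    {m : ℝ → ℝ} {σ : E → E → E → E → F} {C θ M : ℝ} (hC : 0 ≤ C) (hθ : 0 ≤ θ) (hM : 0 ≤ M)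
    (hm : AntitoneOn m (Set.Ici 0)) (hm0 : ∀ r, 0 ≤ r → 0 ≤ m r)
    (hσ : ∀ a b c d, ‖σ a b c d‖
      ≤ C * (min (min (m ‖a‖) (m ‖b‖)) (min (m ‖c‖) (m ‖d‖))) ^ 2 / θ)
    {a b c d : E} (h : M ≤ ‖a‖ ∨ M ≤ ‖b‖ ∨ M ≤ ‖c‖ ∨ M ≤ ‖d‖) :
    ‖σ a b c d‖ ≤ C * m M ^ 2 / θ := by
  have hmM : ∀ x : E, M ≤ ‖x‖ → m ‖x‖ ≤ m M := fun x hx => hm hM (hM.trans hx) hx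
  refine (hσ a b c d).trans ?_
  gcongr C * ?_ / θ
  exact sq_min_min_le_sq_of_le (hm0 _ (norm_nonneg a)) (hm0 _ (norm_nonneg b))
    (hm0 _ (norm_nonneg c)) (hm0 _ (norm_nonneg d))
    (h.imp (hmM a) (.imp (hmM b) (.imp (hmM c) (hmM d))))

theorem norm_sub_add_sub_le {F : Type*} [SeminormedAddCommGroup F] (a b c d : F) :
    ‖a - b + c - d‖ ≤ ‖a‖ + ‖b‖ + ‖c‖ + ‖d‖ :=
  calc ‖a - b + c - d‖ ≤ ‖a - b + c‖ + ‖d‖ := norm_sub_le _ _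
    _ ≤ ‖a - b‖ + ‖c‖ + ‖d‖ := by gcongr; exact norm_add_le _ _
    _ ≤ ‖a‖ + ‖b‖ + ‖c‖ + ‖d‖ := by gcongr; exact norm_sub_le a b

/-- **sextilinear symbol bound.** If the quadrilinear symbol `σ₄`
satisfies `|σ₄(η₁,…,η₄)| ≤ C₀ min(m(η₁),…,m(η₄))²/θ` (with `m` radial nonincreasing,
`0 ≤ m ≤ 1`), then, with `ξ₁+⋯+ξ₆ = 0` and `M = N₄*` the fourth largest of the
magnitudes `|ξⱼ|` (three of the frequencies have magnitude `≥ M`, the remaining ones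
have magnitude `≤ M`, with `M` attained), the symbol
`ν₆ = -i Σ_{k=1}^4 (-1)^{k+1} σ₄(ξ₁,…,ξ_k+ξ_{k+1}+ξ_{k+2},…,ξ₆)`
satisfies `|ν₆| ≤ C' C₀ m(M)²/θ` for an absolute constant `C'`. -/
theorem nu6_symbol_bound :
    ∃ C' : ℝ, 0 < C' ∧
      ∀ (θ C₀ : ℝ), 0 < θ → 0 < C₀ →
      ∀ m : ℝ → ℝ,
        AntitoneOn m (Set.Ici (0 : ℝ)) →
        (∀ r : ℝ, 0 ≤ r → 0 ≤ m r ∧ m r ≤ 1) →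
      ∀ σ₄ : EuclideanSpace ℝ (Fin 2) → EuclideanSpace ℝ (Fin 2) →
          EuclideanSpace ℝ (Fin 2) → EuclideanSpace ℝ (Fin 2) → ℂ,
        (∀ a b c d, ‖σ₄ a b c d‖
            ≤ C₀ * (min (min (m ‖a‖) (m ‖b‖)) (min (m ‖c‖) (m ‖d‖))) ^ 2 / θ) →
      ∀ ξ₁ ξ₂ ξ₃ ξ₄ ξ₅ ξ₆ : EuclideanSpace ℝ (Fin 2),
        ξ₁ + ξ₂ + ξ₃ + ξ₄ + ξ₅ + ξ₆ = 0 →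
      ∀ M : ℝ, 0 ≤ M →
        (∀ j₁ j₂ j₃ : Fin 6, j₁ ≠ j₂ → j₁ ≠ j₃ → j₂ ≠ j₃ →
          (∀ i : Fin 6, i = j₁ ∨ i = j₂ ∨ i = j₃ →
            M ≤ ‖(![ξ₁, ξ₂, ξ₃, ξ₄, ξ₅, ξ₆]) i‖) →
          (∀ k : Fin 6, k ≠ j₁ → k ≠ j₂ → k ≠ j₃ →
            ‖(![ξ₁, ξ₂, ξ₃, ξ₄, ξ₅, ξ₆]) k‖ ≤ M) →
          (∃ k : Fin 6, k ≠ j₁ ∧ k ≠ j₂ ∧ k ≠ j₃ ∧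
            ‖(![ξ₁, ξ₂, ξ₃, ξ₄, ξ₅, ξ₆]) k‖ = M) →
          ‖-Complex.I *
              (σ₄ (ξ₁ + ξ₂ + ξ₃) ξ₄ ξ₅ ξ₆
                - σ₄ ξ₁ (ξ₂ + ξ₃ + ξ₄) ξ₅ ξ₆
                + σ₄ ξ₁ ξ₂ (ξ₃ + ξ₄ + ξ₅) ξ₆
                - σ₄ ξ₁ ξ₂ ξ₃ (ξ₄ + ξ₅ + ξ₆))‖
            ≤ C' * C₀ * (m M) ^ 2 / θ) := by
  refine ⟨4, by norm_num, ?_⟩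
  intro θ C₀ hθ hC₀ m hm hm01 σ₄ hσ ξ₁ ξ₂ ξ₃ ξ₄ ξ₅ ξ₆ _ M hM j₁ j₂ j₃ h12 h13 h23 hbig _ hex
  obtain ⟨k, hk1, hk2, hk3, hkM⟩ := hex
  have large : ∀ a b c : Fin 6, a ≠ b → a ≠ c → b ≠ c →
      M ≤ ‖![ξ₁, ξ₂, ξ₃, ξ₄, ξ₅, ξ₆] a‖ ∨ M ≤ ‖![ξ₁, ξ₂, ξ₃, ξ₄, ξ₅, ξ₆] b‖ ∨
        M ≤ ‖![ξ₁, ξ₂, ξ₃, ξ₄, ξ₅, ξ₆] c‖ := by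
    intro a b c hab hac hbc
    simpa using exists_mem_of_card_add_card_eq (s := {j₁, j₂, j₃}) (t := {a, b, c})
      (by rw [card_eq_three.2 ⟨j₁, j₂, j₃, h12, h13, h23, rfl⟩,
        card_eq_three.2 ⟨a, b, c, hab, hac, hbc, rfl⟩]; rfl)
      (fun i hi => hbig i (by simpa using hi)) (by simp [hk1, hk2, hk3]) hkM.ge
  have term : ∀ a b c d, M ≤ ‖a‖ ∨ M ≤ ‖b‖ ∨ M ≤ ‖c‖ ∨ M ≤ ‖d‖ →
      ‖σ₄ a b c d‖ ≤ C₀ * m M ^ 2 / θ := fun a b c d =>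
    norm_symbol_le_of_le_norm hC₀.le hθ.le hM hm (fun r hr => (hm01 r hr).1) hσ
  have h1 := term (ξ₁ + ξ₂ + ξ₃) ξ₄ ξ₅ ξ₆ (.inr (large 3 4 5 (by decide) (by decide) (by decide)))
  have h2 := term ξ₁ (ξ₂ + ξ₃ + ξ₄) ξ₅ ξ₆
    ((large 0 4 5 (by decide) (by decide) (by decide)).imp_right .inr)
  have h3 := term ξ₁ ξ₂ (ξ₃ + ξ₄ + ξ₅) ξ₆
    ((large 0 1 5 (by decide) (by decide) (by decide)).imp_right (.imp_right .inr))
  have h4 := term ξ₁ ξ₂ ξ₃ (ξ₄ + ξ₅ + ξ₆)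
    ((large 0 1 2 (by decide) (by decide) (by decide)).imp_right (.imp_right .inl))
  rw [norm_mul, norm_neg, Complex.norm_I, one_mul]
  calc _ ≤ _ := norm_sub_add_sub_le _ _ _ _
    _ ≤ 4 * (C₀ * m M ^ 2 / θ) := by linarith
    _ = 4 * C₀ * m M ^ 2 / θ := by ring
end
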